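/- arXiv:2103.02475 — 8 statements merged into one kernel-verified Lean document; each statement's English description precedes it below -/
import Mathlib

section
/- In an acyclic Petri net, a marking M' satisfies M' = M + C·y ≥ 0 for a firing vector y ∈ ℕⁿ if and only if there exists a firing sequence σ with firing vector y such that M[σ⟩M'. (The state equation is both necessary and sufficient for reachability in acyclic nets.) -/
/-- A Petri net with `m` places and `n` transitions. -/
structure PetriNet (m n : ℕ) where
  Pre : Fin m → Fin n → ℕ
  Post : Fin m → Fin n → ℕ

namespace PetriNet

variable {m n : ℕ}

/-- Incidence matrix `C = Post - Pre`. -/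
def C (N : PetriNet m n) (p : Fin m) (t : Fin n) : ℤ :=
  (N.Post p t : ℤ) - (N.Pre p t : ℤ)

/-- Transition `t` is enabled at marking `M`. -/
def enabled (N : PetriNet m n) (M : Fin m → ℕ) (t : Fin n) : Prop :=
  ∀ p, N.Pre p t ≤ M p

/-- Firing transition `t` at marking `M`. -/
def fire (N : PetriNet m n) (M : Fin m → ℕ) (t : Fin n) : Fin m → ℕ :=
  fun p => M p + N.Post p t - N.Pre p t

/-- `fires N M σ M'` : the sequence `σ` is firable at `M` and yields `M'`. -/
inductive fires (N : PetriNet m n) : (Fin m → ℕ) → List (Fin n) → (Fin m → ℕ) → Prop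
  | nil (M : Fin m → ℕ) : fires N M [] M
  | cons {M M' : Fin m → ℕ} {t : Fin n} {σ : List (Fin n)} :
      N.enabled M t → fires N (N.fire M t) σ M' → fires N M (t :: σ) M'

/-- Firing vector of a sequence. -/
def fvec (σ : List (Fin n)) : Fin n → ℕ := fun t => σ.count t

/-- Arcs of the subnet induced by transition set `TI` (full net for `TI = Set.univ`). -/
def arc (N : PetriNet m n) (TI : Set (Fin n)) :
    (Fin m ⊕ Fin n) → (Fin m ⊕ Fin n) → Prop
  | Sum.inl p, Sum.inr t => t ∈ TI ∧ 0 < N.Pre p t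
  | Sum.inr t, Sum.inl p => t ∈ TI ∧ 0 < N.Post p t
  | _, _ => False

/-- The subnet induced by `TI` is acyclic: no directed cycle. -/
def SubnetAcyclic (N : PetriNet m n) (TI : Set (Fin n)) : Prop :=
  ∀ x, ¬ Relation.TransGen (N.arc TI) x x

/-- Transitions in structural conflict. -/
def Tconf (N : PetriNet m n) : Set (Fin n) :=
  {t | ∃ p, 0 < N.Pre p t ∧ ∃ t', t' ≠ t ∧ 0 < N.Pre p t'}

/-- `TI` is non-conflicting: `TI ⊆ T \ T_conf`. -/
def NonConflicting (N : PetriNet m n) (TI : Set (Fin n)) : Prop :=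
  ∀ t ∈ TI, t ∉ N.Tconf

/-- `TI` is non-increasing w.r.t. the GMEC weight vector `w`. -/
def NonIncreasing (N : PetriNet m n) (w : Fin m → ℤ) (TI : Set (Fin n)) : Prop :=
  ∀ t ∈ TI, ∑ p, w p * N.C p t ≤ 0

/-- The `TI`-induced subnet is conflict-free: every place has at most one
output transition among `TI`. -/
def ConflictFreeSubnet (N : PetriNet m n) (TI : Set (Fin n)) : Prop :=
  ∀ p : Fin m, ∀ t ∈ TI, ∀ t' ∈ TI, 0 < N.Pre p t → 0 < N.Pre p t' → t = t'

/-- `σ` consists only of transitions in `TI`. -/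
def ImplicitSeq (TI : Set (Fin n)) (σ : List (Fin n)) : Prop := ∀ t ∈ σ, t ∈ TI

/-- Implicit reach of a marking `Mb`. -/
def RI (N : PetriNet m n) (TI : Set (Fin n)) (Mb : Fin m → ℕ) : Set (Fin m → ℕ) :=
  {M | ∃ σ, ImplicitSeq TI σ ∧ N.fires Mb σ M}

/-- Reachability set. -/
def Reach (N : PetriNet m n) (M0 : Fin m → ℕ) : Set (Fin m → ℕ) :=
  {M | ∃ σ, N.fires M0 σ M}

/-- State equation `M' = M + C·y` (the nonnegativity `M' ≥ 0` is implicit in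
`M' : Fin m → ℕ`). -/
def stateEq (N : PetriNet m n) (M : Fin m → ℕ) (y : Fin n → ℕ) (M' : Fin m → ℕ) : Prop :=
  ∀ p, (M' p : ℤ) = (M p : ℤ) + ∑ t, N.C p t * (y t : ℤ)

/-- `σ` is an explanation of `t` at `M`: an implicit sequence after which `t`
is enabled. -/
def IsExplanation (N : PetriNet m n) (TI : Set (Fin n)) (M : Fin m → ℕ)
    (t : Fin n) (σ : List (Fin n)) : Prop :=
  ImplicitSeq TI σ ∧ ∃ M', N.fires M σ M' ∧ N.enabled M' t

/-- `y` is a minimal explanation vector of `t` at `M`. -/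
def MinExplVec (N : PetriNet m n) (TI : Set (Fin n)) (M : Fin m → ℕ)
    (t : Fin n) (y : Fin n → ℕ) : Prop :=
  (∃ σ, N.IsExplanation TI M t σ ∧ fvec σ = y) ∧
    ∀ σ', N.IsExplanation TI M t σ' → ¬ fvec σ' < y

/-- `y` is the firing vector of some implicit sequence firable at `M`. -/
def FirableVec (N : PetriNet m n) (TI : Set (Fin n)) (M : Fin m → ℕ)
    (y : Fin n → ℕ) : Prop :=
  ∃ σ M', ImplicitSeq TI σ ∧ fvec σ = y ∧ N.fires M σ M'

/-- `y` is a maximal implicit firing vector at `M`. -/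
def MaximalIFV (N : PetriNet m n) (TI : Set (Fin n)) (M : Fin m → ℕ)
    (y : Fin n → ℕ) : Prop :=
  N.FirableVec TI M y ∧ ∀ y', N.FirableVec TI M y' → ¬ y < y'

/-- `y` is the maximal implicit firing vector at `M`, dominating all others. -/
def GreatestIFV (N : PetriNet m n) (TI : Set (Fin n)) (M : Fin m → ℕ)
    (y : Fin n → ℕ) : Prop :=
  N.FirableVec TI M y ∧ ∀ y', N.FirableVec TI M y' → y' ≤ y

/-- One step of the BRG: fire a minimal explanation followed by an explicit
transition `t ∉ TI`. -/
def BRGstep (N : PetriNet m n) (TI : Set (Fin n)) (M1 M2 : Fin m → ℕ) : Prop :=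
  ∃ t ∉ TI, ∃ y, N.MinExplVec TI M1 t y ∧
    ∀ p, (M2 p : ℤ) = (M1 p : ℤ) + (∑ s, N.C p s * (y s : ℤ)) + N.C p t

/-- `Mb` is a basis marking of the BRG with initial marking `M0`. -/
def Basis (N : PetriNet m n) (TI : Set (Fin n)) (M0 Mb : Fin m → ℕ) : Prop :=
  Relation.ReflTransGen (N.BRGstep TI) M0 Mb

/-- A marking is dead if it enables no transition. -/
def Dead (N : PetriNet m n) (M : Fin m → ℕ) : Prop := ∀ t, ¬ N.enabled M t

/-- Final markings of the GMEC `(w, k)`. -/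
def Final (w : Fin m → ℤ) (k : ℤ) (M : Fin m → ℕ) : Prop :=
  ∑ p, w p * (M p : ℤ) ≤ k

/-- The plant is non-blocking. -/
def NonBlocking (N : PetriNet m n) (M0 : Fin m → ℕ) (w : Fin m → ℤ) (k : ℤ) : Prop :=
  ∀ M ∈ N.Reach M0, ∃ M' ∈ N.Reach M, Final w k M'

/-- Boundedness of the marked net. -/
def Bounded (N : PetriNet m n) (M0 : Fin m → ℕ) : Prop :=
  ∃ K, ∀ M ∈ N.Reach M0, ∀ p, M p ≤ K

end PetriNet

open PetriNet


namespace PetriNetProofAux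

open PetriNet Finset

variable {m n : ℕ}

lemma fires_stateEq (N : PetriNet m n) {M M' : Fin m → ℕ} {σ : List (Fin n)}
    (h : N.fires M σ M') : N.stateEq M (fvec σ) M' := by
  induction h with
  | nil M => intro p; simp [fvec, PetriNet.C]
  | @cons M M' t σ hen hf ih =>
    intro p
    have h1 := ih p
    have hfire : ((N.fire M t p : ℕ) : ℤ) = (M p : ℤ) + N.C p t := by
      have := hen p
      simp only [PetriNet.fire, PetriNet.C]
      omega
    have hsum : ∑ s, N.C p s * ((fvec (t :: σ)) s : ℤ)
        = (∑ s, N.C p s * ((fvec σ) s : ℤ)) + N.C p t := by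
      have : ∀ s : Fin n, N.C p s * ((fvec (t :: σ)) s : ℤ)
          = N.C p s * ((fvec σ) s : ℤ) + (if s = t then N.C p t else 0) := by
        intro s
        simp only [fvec, List.count_cons]
        by_cases hst : s = t
        · subst hst; simp; ring
        · simp [hst, Ne.symm hst]
      rw [Finset.sum_congr rfl (fun s _ => this s), Finset.sum_add_distrib]
      simp
    rw [hsum]
    rw [h1, hfire]
    ring

/-- relation: s feeds an input place of t -/
def rel (N : PetriNet m n) (s t : Fin n) : Prop :=
  ∃ p, 0 < N.Post p s ∧ 0 < N.Pre p t

lemma rel_arc (N : PetriNet m n) {s t : Fin n} (h : rel N s t) :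
    Relation.TransGen (N.arc Set.univ) (Sum.inr s) (Sum.inr t) := by
  obtain ⟨p, h1, h2⟩ := h
  have a1 : N.arc Set.univ (Sum.inr s) (Sum.inl p) := ⟨Set.mem_univ _, h1⟩
  have a2 : N.arc Set.univ (Sum.inl p) (Sum.inr t) := ⟨Set.mem_univ _, h2⟩
  exact (Relation.TransGen.single a1).tail a2

lemma transGen_rel_arc (N : PetriNet m n) {s t : Fin n}
    (h : Relation.TransGen (rel N) s t) :
    Relation.TransGen (N.arc Set.univ) (Sum.inr s) (Sum.inr t) := by
  induction h with
  | single h => exact rel_arc N h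
  | tail _ h ih => exact ih.trans (rel_arc N h)

lemma exists_enabled (N : PetriNet m n) (hacyc : N.SubnetAcyclic Set.univ)
    {M M' : Fin m → ℕ} {y : Fin n → ℕ} (hse : N.stateEq M y M')
    (hy : ∃ t, 0 < y t) : ∃ t, 0 < y t ∧ N.enabled M t := by
  have hirr : ∀ x, ¬ Relation.TransGen (rel N) x x := fun x hx =>
    hacyc (Sum.inr x) (transGen_rel_arc N hx)
  have : IsTrans (Fin n) (Relation.TransGen (rel N)) :=
    ⟨fun _ _ _ => Relation.TransGen.trans⟩
  have : IsIrrefl (Fin n) (Relation.TransGen (rel N)) := ⟨hirr⟩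
  have hwf : WellFounded (Relation.TransGen (rel N)) :=
    Finite.wellFounded_of_trans_of_irrefl _
  obtain ⟨t, ht, hmin⟩ := hwf.has_min {t | 0 < y t} hy
  refine ⟨t, ht, ?_⟩
  intro p
  by_cases hp : 0 < N.Pre p t
  swap
  · omega
  -- every s in support of y has Post p s = 0
  have hkey : ∀ s, 0 < y s → N.Post p s = 0 := by
    intro s hs
    by_contra hpost
    exact hmin s hs (Relation.TransGen.single ⟨p, Nat.pos_of_ne_zero hpost, hp⟩)
  have h1 : ∀ s : Fin n, N.C p s * (y s : ℤ) = -((N.Pre p s : ℤ) * (y s : ℤ)) := by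
    intro s
    rcases Nat.eq_zero_or_pos (y s) with h | h
    · simp [h]
    · have := hkey s h; simp only [PetriNet.C, this]; push_cast; ring
  have hse_p := hse p
  rw [Finset.sum_congr rfl (fun s _ => h1 s)] at hse_p
  rw [Finset.sum_neg_distrib] at hse_p
  have hsingle : (N.Pre p t : ℤ) * (y t : ℤ) ≤ ∑ s, (N.Pre p s : ℤ) * (y s : ℤ) :=
    Finset.single_le_sum (f := fun s => (N.Pre p s : ℤ) * (y s : ℤ))
      (fun s _ => by positivity) (Finset.mem_univ t)
  have hyt : (1 : ℤ) ≤ (y t : ℤ) := by exact_mod_cast ht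
  have h2 : (N.Pre p t : ℤ) ≤ (N.Pre p t : ℤ) * (y t : ℤ) :=
    le_mul_of_one_le_right (by positivity) hyt
  have h3 : (0 : ℤ) ≤ (M' p : ℤ) := by positivity
  have : (N.Pre p t : ℤ) ≤ (M p : ℤ) := by linarith
  exact_mod_cast this

lemma stateEq_to_fires (N : PetriNet m n) (hacyc : N.SubnetAcyclic Set.univ)
    (M' : Fin m → ℕ) :
    ∀ k (y : Fin n → ℕ) (M : Fin m → ℕ), ∑ t, y t = k → N.stateEq M y M' →
      ∃ σ : List (Fin n), fvec σ = y ∧ N.fires M σ M' := by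
  intro k
  induction k using Nat.strong_induction_on with
  | _ k ih =>
    intro y M hk hse
    by_cases hy : ∃ t, 0 < y t
    · obtain ⟨t, ht, hen⟩ := exists_enabled N hacyc hse hy
      set M1 := N.fire M t with hM1
      set y' := Function.update y t (y t - 1) with hy'
      have hfire : ∀ p, ((M1 p : ℕ) : ℤ) = (M p : ℤ) + N.C p t := by
        intro p
        have := hen p
        simp only [hM1, PetriNet.fire, PetriNet.C]
        omega
      have hsum' : ∀ p, ∑ s, N.C p s * ((y' s : ℕ) : ℤ)
          = (∑ s, N.C p s * ((y s : ℕ) : ℤ)) - N.C p t := by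
        intro p
        have e1 : ∑ s, N.C p s * ((y' s : ℕ) : ℤ)
            = N.C p t * ((y t - 1 : ℕ) : ℤ) + ∑ s ∈ Finset.univ.erase t, N.C p s * ((y s : ℕ) : ℤ) := by
          rw [← Finset.add_sum_erase _ _ (Finset.mem_univ t)]
          congr 1
          · simp [hy']
          · apply Finset.sum_congr rfl
            intro s hs
            have : s ≠ t := (Finset.mem_erase.mp hs).1
            simp [hy', Function.update_of_ne this]
        have e2 : ∑ s, N.C p s * ((y s : ℕ) : ℤ)
            = N.C p t * ((y t : ℕ) : ℤ) + ∑ s ∈ Finset.univ.erase t, N.C p s * ((y s : ℕ) : ℤ) :=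
          (Finset.add_sum_erase _ _ (Finset.mem_univ t)).symm
        rw [e1, e2]
        have : ((y t - 1 : ℕ) : ℤ) = (y t : ℤ) - 1 := by omega
        rw [this]; ring
      have hse1 : N.stateEq M1 y' M' := by
        intro p
        rw [hsum' p, hfire p, hse p]
        ring
      have hlt : ∑ s, y' s < k := by
        have e1 : ∑ s, y' s = (y t - 1) + ∑ s ∈ Finset.univ.erase t, y s := by
          rw [← Finset.add_sum_erase _ _ (Finset.mem_univ t)]
          congr 1
          · simp [hy']
          · apply Finset.sum_congr rfl
            intro s hs
            simp [hy', Function.update_of_ne (Finset.mem_erase.mp hs).1]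
        have e2 : ∑ s, y s = y t + ∑ s ∈ Finset.univ.erase t, y s :=
          (Finset.add_sum_erase _ _ (Finset.mem_univ t)).symm
        omega
      obtain ⟨σ', hfv, hfires⟩ := ih _ hlt y' M1 rfl hse1
      refine ⟨t :: σ', ?_, PetriNet.fires.cons hen hfires⟩
      funext s
      have hcs := congrFun hfv s
      by_cases hst : s = t
      · subst hst
        have hc : fvec (s :: σ') s = fvec σ' s + 1 := by simp [fvec]
        have hy's : y' s = y s - 1 := by simp [hy']
        omega
      · have hc : fvec (t :: σ') s = fvec σ' s := by
          show (t :: σ').count s = σ'.count s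
          rw [List.count_cons]
          simp [hst, Ne.symm hst]
        have hy's : y' s = y s := by simp [hy', Function.update_of_ne hst]
        omega
    · push_neg at hy
      have hy0 : ∀ t, y t = 0 := fun t => Nat.eq_zero_of_le_zero (hy t)
      have hMM : M' = M := by
        funext p
        have := hse p
        simp [hy0] at this
        exact_mod_cast this
      refine ⟨[], ?_, by rw [hMM]; exact PetriNet.fires.nil M⟩
      funext s
      simp [fvec, hy0]

end PetriNetProofAux

/-- In an acyclic Petri net, the state equation characterizes
reachability. -/
theorem state_equation_iff_reachable_of_acyclic {m n : ℕ} (N : PetriNet m n)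
    (hacyc : N.SubnetAcyclic Set.univ)
    (M M' : Fin m → ℕ) (y : Fin n → ℕ) :
    N.stateEq M y M' ↔ ∃ σ : List (Fin n), fvec σ = y ∧ N.fires M σ M' := by
  constructor
  · intro hse
    exact PetriNetProofAux.stateEq_to_fires N hacyc M' _ y M rfl hse
  · rintro ⟨σ, hfv, hf⟩
    exact hfv ▸ PetriNetProofAux.fires_stateEq N hf
end

section
/- Let N be a Petri net with basis partition π = (T_E, T_I) such that no implicit transition shares an input place with any transition in T_conf (i.e., T_I is non-conflicting). Let M_b be a marking, t ∈ T_E an explicit transition, and y_min a minimal explanation vector of t at M_b. Then for any implicit firing vector y ≥ y_min with M = M_b + C_I·y ≥ 0, transition t is enabled at M. -/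
open PetriNet

/-!
The minimal explanation is realised by an implicit firing sequence, so by the state equation
`t` is enabled at `M_b + C_I·y_min`. Passing from `y_min` to `y` fires only further implicit
transitions, and none of them consumes from an input place `p` of `t`: an implicit transition
with input `p` would be in structural conflict with `t`. Hence the marking of every input place
of `t` can only grow.
-/

namespace PetriNet

variable {m n : ℕ} (N : PetriNet m n)

lemma fvec_cons (t : Fin n) (σ : List (Fin n)) : fvec (t :: σ) = fvec σ + Pi.single t 1 := by
  ext s
  by_cases h : s = t <;> simp [fvec, h, Ne.symm]

lemma cast_fire {M : Fin m → ℕ} {t : Fin n} (h : N.enabled M t) (p : Fin m) :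
    (N.fire M t p : ℤ) = M p + N.C p t := by
  have hle : N.Pre p t ≤ M p + N.Post p t := (h p).trans (Nat.le_add_right _ _)
  simp only [fire, C, Nat.cast_sub hle, Nat.cast_add]
  ring

lemma stateEq_of_fires {M M' : Fin m → ℕ} {σ : List (Fin n)} (h : N.fires M σ M') :
    N.stateEq M (fvec σ) M' := by
  induction h with
  | nil M => intro p; simp [fvec]
  | @cons M M' t σ hen _ ih =>
    intro p
    simp only [ih p, cast_fire N hen, fvec_cons, Pi.add_apply, Nat.cast_add, mul_add,
      Finset.sum_add_distrib, Pi.single_apply, Nat.cast_ite, Nat.cast_one, Nat.cast_zero,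
      mul_ite, mul_one, mul_zero, Finset.sum_ite_eq', Finset.mem_univ, if_true]
    ring

lemma pre_eq_zero_of_nonConflicting {TI : Set (Fin n)} (hnc : N.NonConflicting TI)
    {t s : Fin n} (ht : t ∉ TI) (hs : s ∈ TI) {p : Fin m} (hpt : 0 < N.Pre p t) :
    N.Pre p s = 0 := by
  by_contra hne
  exact hnc s hs ⟨p, Nat.pos_of_ne_zero hne, t, fun h => ht (h ▸ hs), hpt⟩

lemma stateEq_apply_mono {M M₁ M₂ : Fin m → ℕ} {y₁ y₂ : Fin n → ℕ} {p : Fin m}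
    (h₁ : N.stateEq M y₁ M₁) (h₂ : N.stateEq M y₂ M₂) (hy : y₁ ≤ y₂)
    (hp : ∀ s, y₁ s < y₂ s → N.Pre p s = 0) : M₁ p ≤ M₂ p := by
  have hterm : ∀ s ∈ Finset.univ, N.C p s * (y₁ s : ℤ) ≤ N.C p s * (y₂ s : ℤ) := by
    intro s _
    rcases (hy s).eq_or_lt with heq | hlt
    · rw [heq]
    · have hC : 0 ≤ N.C p s := by simp [C, hp s hlt]
      exact mul_le_mul_of_nonneg_left (by exact_mod_cast hy s) hC
  have hsum := Finset.sum_le_sum hterm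
  have e₁ := h₁ p
  have e₂ := h₂ p
  omega

end PetriNet

theorem enabled_of_ge_min_explanation_general {m n : ℕ} (N : PetriNet m n) (TI : Set (Fin n))
    (hnc : N.NonConflicting TI)
    (Mb M : Fin m → ℕ) (t : Fin n) (ht : t ∉ TI)
    (ymin y : Fin n → ℕ)
    (hmin : N.MinExplVec TI Mb t ymin)
    (hsupp : ∀ s ∉ TI, y s = 0)
    (hge : ymin ≤ y)
    (hM : N.stateEq Mb y M) :
    N.enabled M t := by
  obtain ⟨⟨σ, ⟨-, M', hfires, hen⟩, rfl⟩, -⟩ := hmin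
  intro p
  rcases Nat.eq_zero_or_pos (N.Pre p t) with h0 | hpt
  · simp [h0]
  have hextra : ∀ s, fvec σ s < y s → N.Pre p s = 0 := by
    intro s hs
    have hsTI : s ∈ TI := by_contra fun h => by simp [hsupp s h] at hs
    exact N.pre_eq_zero_of_nonConflicting hnc ht hsTI hpt
  exact (hen p).trans (N.stateEq_apply_mono (N.stateEq_of_fires hfires) hM hge hextra)

/-- if `t` has minimal explanation vector `y_min` at `M_b` and
`y ≥ y_min` is an implicit firing vector with `M = M_b + C_I·y ≥ 0`, then `t`
is enabled at `M`. -/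
theorem enabled_of_ge_min_explanation {m n : ℕ} (N : PetriNet m n) (TI : Set (Fin n))
    (hacyc : N.SubnetAcyclic TI) (hnc : N.NonConflicting TI)
    (Mb M : Fin m → ℕ) (t : Fin n) (ht : t ∉ TI)
    (ymin y : Fin n → ℕ)
    (hmin : N.MinExplVec TI Mb t ymin)
    (hsupp : ∀ s ∉ TI, y s = 0)
    (hge : ymin ≤ y)
    (hM : N.stateEq Mb y M) :
    N.enabled M t :=
  enabled_of_ge_min_explanation_general N TI hnc Mb M t ht ymin y hmin hsupp hge hM
end

section
/- Let N be a Petri net with non-conflicting implicit transition set T_I inducing an acyclic conflict-free subnet, and let M_b be a basis marking with i-maximal marking M_{b,max} (reached from M_b by firing a sequence with the maximal implicit firing vector). If t ∈ T_E is enabled after firing a minimal explanation σ_min ∈ Σ_min(M_b, t) from M_b, then t is enabled at M_{b,max}. -/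
open PetriNet

namespace PetriNet

variable {m n : ℕ}

lemma disj {N : PetriNet m n} {TI : Set (Fin n)} (hnc : N.NonConflicting TI)
    {s u : Fin n} (hs : s ∈ TI) (hne : u ≠ s) (p : Fin m) :
    N.Pre p s = 0 ∨ N.Pre p u = 0 := by
  by_contra h
  push_neg at h
  exact hnc s hs ⟨p, Nat.pos_of_ne_zero h.1, u, hne, Nat.pos_of_ne_zero h.2⟩

lemma fires_append {N : PetriNet m n} {M M1 M2 : Fin m → ℕ} {σ1 σ2 : List (Fin n)}
    (h1 : N.fires M σ1 M1) (h2 : N.fires M1 σ2 M2) : N.fires M (σ1 ++ σ2) M2 := by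
  induction σ1 generalizing M with
  | nil => cases h1; exact h2
  | cons t σ ih => cases h1 with | cons he hr => exact fires.cons he (ih hr)

lemma fires_state {N : PetriNet m n} : ∀ {σ : List (Fin n)} {M M' : Fin m → ℕ},
    N.fires M σ M' → ∀ p, (M' p : ℤ) = (M p : ℤ) + ∑ s, N.C p s * (fvec σ s : ℤ) := by
  intro σ
  induction σ with
  | nil => intro M M' h p; cases h; simp [fvec]
  | cons t σ' ih =>
    intro M M' h p
    cases h with
    | cons he hr =>
      have h1 := ih hr p
      have h2 := he p
      have hfire : ((N.fire M t p : ℕ) : ℤ) = (M p : ℤ) + N.C p t := by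
        have hle : N.Pre p t ≤ M p + N.Post p t := le_trans h2 (Nat.le_add_right _ _)
        simp only [fire, C]
        rw [Nat.cast_sub hle]
        push_cast; ring
      have hsum : ∑ s, N.C p s * (fvec (t :: σ') s : ℤ)
          = N.C p t + ∑ s, N.C p s * (fvec σ' s : ℤ) := by
        simp only [fvec, List.count_cons, beq_iff_eq]
        push_cast
        rw [Finset.sum_congr rfl
          (fun s _ => by rw [mul_add])]
        rw [Finset.sum_add_distrib]
        have : ∑ s : Fin n, N.C p s * (if t = s then (1 : ℤ) else 0) = N.C p t := by
          simp [mul_ite]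
        rw [this]; ring
      rw [h1, hfire, hsum]; ring

lemma fires_unique {N : PetriNet m n} {M M1 M2 : Fin m → ℕ} {σ1 σ2 : List (Fin n)}
    (h1 : N.fires M σ1 M1) (h2 : N.fires M σ2 M2) (hv : fvec σ1 = fvec σ2) :
    M1 = M2 := by
  funext p
  have e1 := fires_state h1 p
  have e2 := fires_state h2 p
  rw [hv] at e1
  exact_mod_cast e1.trans e2.symm

lemma erase_fires {N : PetriNet m n} {TI : Set (Fin n)} (hnc : N.NonConflicting TI)
    {t : Fin n} (htTI : t ∈ TI) :
    ∀ {σ : List (Fin n)} {M M' : Fin m → ℕ}, ImplicitSeq TI σ →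
      N.fires M σ M' → N.enabled M t →
      ∃ M'', N.fires (N.fire M t) (σ.erase t) M'' := by
  intro σ
  induction σ with
  | nil => intro M M' _ hf _; exact ⟨_, fires.nil _⟩
  | cons s σ' ih =>
    intro M M' hTI hf hen
    cases hf with
    | cons hs hrest =>
      by_cases hst : s = t
      · subst hst
        rw [List.erase_cons_head]
        exact ⟨M', hrest⟩
      · have hdisj : ∀ p, N.Pre p t = 0 ∨ N.Pre p s = 0 := fun p => disj hnc htTI hst p
        have hen_s : N.enabled (N.fire M t) s := by
          intro p
          have h1 := hen p
          have h2 := hs p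
          have h3 := hdisj p
          simp only [fire]
          omega
        have hen_t : N.enabled (N.fire M s) t := by
          intro p
          have h1 := hen p
          have h2 := hs p
          have h3 := hdisj p
          simp only [fire]
          omega
        have hcomm : N.fire (N.fire M t) s = N.fire (N.fire M s) t := by
          funext p
          have h1 := hen p
          have h2 := hs p
          have h3 := hdisj p
          simp only [fire]
          omega
        obtain ⟨M'', hM''⟩ :=
          ih (fun u hu => hTI u (List.mem_cons_of_mem _ hu)) hrest hen_t
        refine ⟨M'', ?_⟩
        rw [List.erase_cons_tail (by simpa using hst)]
        exact fires.cons hen_s (by rw [hcomm]; exact hM'')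

lemma keller {N : PetriNet m n} {TI : Set (Fin n)} (hnc : N.NonConflicting TI) :
    ∀ (σ1 : List (Fin n)) {M M1 : Fin m → ℕ} (σ2 : List (Fin n)),
      ImplicitSeq TI σ1 → ImplicitSeq TI σ2 →
      N.fires M σ1 M1 → (∃ M2, N.fires M σ2 M2) →
      ∃ σ2', ImplicitSeq TI σ2' ∧ (∃ M', N.fires M1 σ2' M') ∧
        ∀ s, fvec σ1 s + fvec σ2' s = max (fvec σ1 s) (fvec σ2 s) := by
  intro σ1
  induction σ1 with
  | nil =>
    intro M M1 σ2 _ h2 hf1 hf2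
    cases hf1
    exact ⟨σ2, h2, hf2, fun s => by simp [fvec]⟩
  | cons t σ1' ih =>
    intro M M1 σ2 h1 h2 hf1 hf2
    cases hf1 with
    | cons ht hrest =>
      have htTI : t ∈ TI := h1 t (by simp)
      obtain ⟨M2, hf2'⟩ := hf2
      obtain ⟨Me, hfe⟩ := erase_fires hnc htTI h2 hf2' ht
      obtain ⟨σ2', hTI', hf', hcnt⟩ :=
        ih (σ2.erase t) (fun s hs => h1 s (List.mem_cons_of_mem _ hs))
          (fun s hs => h2 s (List.mem_of_mem_erase hs)) hrest ⟨Me, hfe⟩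
      refine ⟨σ2', hTI', hf', fun s => ?_⟩
      have hc := hcnt s
      simp only [fvec, List.count_cons, List.count_erase, beq_iff_eq] at hc ⊢
      omega

lemma mono_on_input {N : PetriNet m n} {TI : Set (Fin n)} (hnc : N.NonConflicting TI)
    {t : Fin n} (ht : t ∉ TI) {p : Fin m} (hp : 0 < N.Pre p t) :
    ∀ {σ : List (Fin n)} {M M' : Fin m → ℕ}, ImplicitSeq TI σ →
      N.fires M σ M' → M p ≤ M' p := by
  intro σ
  induction σ with
  | nil => intro M M' _ hf; cases hf; exact le_refl _
  | cons s σ' ih =>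
    intro M M' hTI hf
    cases hf with
    | cons hs hrest =>
      have hsTI : s ∈ TI := hTI s (by simp)
      have hne : t ≠ s := fun h => ht (h ▸ hsTI)
      have hPre : N.Pre p s = 0 := by
        rcases disj hnc hsTI hne p with h | h
        · exact h
        · omega
      have hstep : M p ≤ N.fire M s p := by
        simp only [fire, hPre]
        omega
      exact le_trans hstep (ih (fun u hu => hTI u (List.mem_cons_of_mem _ hu)) hrest)

end PetriNet

/-- if `t ∈ T_E` is enabled after a minimal explanation from
`M_b`, then it is enabled at the i-maximal marking `M_{b,max}`. -/
theorem enabled_at_imax_of_min_explanation {m n : ℕ} (N : PetriNet m n)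
    (TI : Set (Fin n))
    (hacyc : N.SubnetAcyclic TI) (hnc : N.NonConflicting TI)
    (hcf : N.ConflictFreeSubnet TI)
    (Mb Mbmax : Fin m → ℕ) (t : Fin n) (ht : t ∉ TI)
    (σmin : List (Fin n))
    (hexpl : N.IsExplanation TI Mb t σmin)
    (hminimal : ∀ σ', N.IsExplanation TI Mb t σ' → ¬ fvec σ' < fvec σmin)
    (ymax : Fin n → ℕ) (hmax : N.MaximalIFV TI Mb ymax)
    (hreach : ∃ σ, ImplicitSeq TI σ ∧ fvec σ = ymax ∧ N.fires Mb σ Mbmax) :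
    N.enabled Mbmax t := by
  obtain ⟨σ, hσTI, hσv, hσf⟩ := hreach
  obtain ⟨hminTI, M', hminf, henab⟩ := hexpl
  -- Keller with σ1 = σ (vector ymax), σ2 = σmin : residue firable at Mbmax
  obtain ⟨σr, hσrTI, ⟨Mr, hσrf⟩, hcnt1⟩ :=
    keller hnc σ σmin hσTI hminTI hσf ⟨M', hminf⟩
  -- the combined vector is firable, so by maximality the residue is empty
  have hfv : N.FirableVec TI Mb (fun s => ymax s + fvec σr s) := by
    refine ⟨σ ++ σr, Mr, ?_, ?_, fires_append hσf hσrf⟩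
    · intro u hu
      rcases List.mem_append.mp hu with h | h
      · exact hσTI u h
      · exact hσrTI u h
    · funext s
      simp only [fvec, List.count_append]
      have := congrFun hσv s
      simp only [fvec] at this
      omega
  have hle : ymax ≤ fun s => ymax s + fvec σr s := fun s => Nat.le_add_right _ _
  have hyeq : (fun s => ymax s + fvec σr s) ≤ ymax := by
    by_contra h
    exact hmax.2 _ hfv (lt_iff_le_not_ge.mpr ⟨hle, h⟩)
  have hminle : ∀ s, fvec σmin s ≤ ymax s := by
    intro s
    have h1 := hcnt1 s
    have h2 := hyeq s
    have h3 := congrFun hσv s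
    simp only at h2
    omega
  -- Keller with σ1 = σmin, σ2 = σ : residue firable at M', total vector = ymax
  obtain ⟨σr2, hσr2TI, ⟨M2, hσr2f⟩, hcnt2⟩ :=
    keller hnc σmin σ hminTI hσTI hminf ⟨Mbmax, hσf⟩
  have hveq : fvec (σmin ++ σr2) = fvec σ := by
    funext s
    have h1 := hcnt2 s
    have h2 := hminle s
    have h3 := congrFun hσv s
    simp only [fvec, List.count_append] at *
    omega
  have hM2 : M2 = Mbmax :=
    fires_unique (fires_append hminf hσr2f) hσf hveq
  -- t's input places do not decrease along the implicit sequence σr2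
  intro p
  by_cases hp : 0 < N.Pre p t
  · have hmono : M' p ≤ M2 p := mono_on_input hnc ht hp hσr2TI hσr2f
    have := henab p
    rw [← hM2]
    omega
  · omega
end

section
/- Let G = (N, M_0, F) with F = {M ∈ ℕ^m | w^T·M ≤ k} defined by a GMEC (w, k), and let (T_E, T_I) be a basis partition with T_I non-increasing (i.e., w^T·C(·, t) ≤ 0 for all t ∈ T_I) and the T_I-induced subnet acyclic and conflict-free. Then for any basis marking M_b with i-maximal marking M_{b,max}, the implicit reach R_I(M_b) intersects F if and only if M_{b,max} ∈ F. -/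
open PetriNet

theorem fires_state {m n : ℕ} (N : PetriNet m n) :
    ∀ {M M' : Fin m → ℕ} {σ : List (Fin n)}, N.fires M σ M' →
      ∀ p, (M' p : ℤ) = (M p : ℤ) + ∑ t, N.C p t * (fvec σ t : ℤ) := by
  intro M M' σ h
  induction h with
  | nil M => intro p; simp [fvec]
  | @cons M M' t σ hen hf ih =>
    intro p
    have hfire : ((N.fire M t) p : ℤ) = (M p : ℤ) + N.C p t := by
      have := hen p
      simp [PetriNet.fire, PetriNet.C]
      omega
    have := ih p
    rw [this, hfire]
    have hcount : ∀ s : Fin n, (fvec (t :: σ) s : ℤ)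
        = (fvec σ s : ℤ) + (if t = s then 1 else 0) := by
      intro s
      simp [fvec, List.count_cons]
    have : ∑ s, N.C p s * (fvec (t :: σ) s : ℤ)
        = ∑ s, (N.C p s * (fvec σ s : ℤ) + N.C p s * (if t = s then 1 else 0)) := by
      apply Finset.sum_congr rfl
      intro s _
      rw [hcount s]; ring
    rw [this, Finset.sum_add_distrib]
    have : ∑ s, N.C p s * (if t = s then 1 else 0) = N.C p t := by
      simp [Finset.sum_ite_eq, mul_ite]
    rw [this]; ring


/-- the implicit reach of `M_b` intersects the final set `F` iff
the i-maximal marking `M_{b,max}` is final. -/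
theorem ri_meets_final_iff_imax_final {m n : ℕ} (N : PetriNet m n)
    (TI : Set (Fin n)) (w : Fin m → ℤ) (k : ℤ)
    (hacyc : N.SubnetAcyclic TI) (hcf : N.ConflictFreeSubnet TI)
    (hni : N.NonIncreasing w TI)
    (Mb Mbmax : Fin m → ℕ) (ymax : Fin n → ℕ)
    (hmax : N.GreatestIFV TI Mb ymax)
    (hreach : ∃ σ, ImplicitSeq TI σ ∧ fvec σ = ymax ∧ N.fires Mb σ Mbmax) :
    (∃ M ∈ N.RI TI Mb, Final w k M) ↔ Final w k Mbmax := by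

  -- weighted sum lemma
  have wsum : ∀ (M M' : Fin m → ℕ) (σ : List (Fin n)), N.fires M σ M' →
      ∑ p, w p * (M' p : ℤ) = ∑ p, w p * (M p : ℤ)
        + ∑ t, (∑ p, w p * N.C p t) * (fvec σ t : ℤ) := by
    intro M M' σ h
    have hst := fires_state N h
    calc ∑ p, w p * (M' p : ℤ)
        = ∑ p, (w p * (M p : ℤ) + ∑ t, (w p * N.C p t) * (fvec σ t : ℤ)) := by
          apply Finset.sum_congr rfl; intro p _
          rw [hst p, mul_add, Finset.mul_sum]
          ring_nf
      _ = ∑ p, w p * (M p : ℤ) + ∑ p, ∑ t, (w p * N.C p t) * (fvec σ t : ℤ) :=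
          Finset.sum_add_distrib
      _ = ∑ p, w p * (M p : ℤ) + ∑ t, (∑ p, w p * N.C p t) * (fvec σ t : ℤ) := by
          rw [Finset.sum_comm]
          congr 1
          apply Finset.sum_congr rfl; intro t _
          rw [Finset.sum_mul]
  obtain ⟨σmax, hσmaxI, hσmaxv, hσmaxf⟩ := hreach
  constructor
  · rintro ⟨M, ⟨σ, hσI, hσf⟩, hMfin⟩
    -- y := fvec σ is a firable vec, hence ≤ ymax
    have hfv : N.FirableVec TI Mb (fvec σ) := ⟨σ, M, hσI, rfl, hσf⟩
    have hle : fvec σ ≤ ymax := hmax.2 _ hfv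
    have h1 := wsum Mb M σ hσf
    have h2 := wsum Mb Mbmax σmax hσmaxf
    rw [hσmaxv] at h2
    -- compare termwise
    have key : ∑ t, (∑ p, w p * N.C p t) * (ymax t : ℤ)
        ≤ ∑ t, (∑ p, w p * N.C p t) * (fvec σ t : ℤ) := by
      apply Finset.sum_le_sum
      intro t _
      by_cases ht : t ∈ TI
      · have hw : ∑ p, w p * N.C p t ≤ 0 := hni t ht
        have : (fvec σ t : ℤ) ≤ (ymax t : ℤ) := by exact_mod_cast hle t
        exact mul_le_mul_of_nonpos_left this hw
      · have h0 : fvec σ t = 0 := by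
          simp [fvec, List.count_eq_zero]
          intro hmem; exact ht (hσI t hmem)
        have h0' : ymax t = 0 := by
          have : fvec σmax t = 0 := by
            simp [fvec, List.count_eq_zero]
            intro hmem; exact ht (hσmaxI t hmem)
          rw [← hσmaxv]; exact this
        simp [h0, h0']
    unfold Final at *
    omega
  · intro hfin
    exact ⟨Mbmax, ⟨σmax, hσmaxI, hσmaxf⟩, hfin⟩
end

section
/- Let G = (N, M_0, F) be a bounded plant with final set F, and let B be a CI-BRG of G with respect to basis partition (T_E, T_I) (T_I non-conflicting and non-increasing, T_I-induced subnet acyclic). Then G is non-blocking (every marking reachable from M_0 can reach some final marking) if and only if for every basis marking M_b of B there exists a basis marking M_b' accessible from M_b in B with R_I(M_b') ∩ F ≠ ∅. -/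
open PetriNet

/-! Implicit transitions are structurally conflict-free, so an enabled implicit transition cannot
be disabled by another transition and can be moved to the front of any firing sequence (a
Keller-style residual argument). Hence implicit reach sets are confluent, and an explicit
transition commutes with implicit sequences. Every reachable marking therefore lies in `R_I` of an
accessible basis marking (explaining each explicit transition minimally), and a marking in
`R_I(M_b)` can follow every BRG edge out of `M_b` into `R_I` of its target. A final marking in
`R_I(M_b')` is joined by confluence with the tracked marking; the join is reached from the final
marking by implicit transitions, which do not increase the weight `w`. -/

namespace PetriNet

variable {m n : ℕ} {N : PetriNet m n} {TI : Set (Fin n)} {M M' M'' Mb : Fin m → ℕ}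
  {σ τ ρ : List (Fin n)} {t u : Fin n}

theorem fires.append (h₁ : N.fires M σ M') (h₂ : N.fires M' τ M'') :
    N.fires M (σ ++ τ) M'' := by
  induction h₁ with
  | nil => exact h₂
  | cons he _ ih => exact .cons he (ih h₂)

theorem mem_reach_self (M : Fin m → ℕ) : M ∈ N.Reach M := ⟨[], .nil M⟩

theorem reach_trans (h₁ : M' ∈ N.Reach M) (h₂ : M'' ∈ N.Reach M') : M'' ∈ N.Reach M :=
  let ⟨σ, hσ⟩ := h₁
  let ⟨τ, hτ⟩ := h₂
  ⟨σ ++ τ, hσ.append hτ⟩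

theorem mem_RI_self (M : Fin m → ℕ) : M ∈ N.RI TI M :=
  ⟨[], fun _ h => absurd h List.not_mem_nil, .nil M⟩

theorem RI_subset_reach (M : Fin m → ℕ) : N.RI TI M ⊆ N.Reach M :=
  fun _ ⟨σ, _, h⟩ => ⟨σ, h⟩

theorem fire_mem_RI (h : M' ∈ N.RI TI M) (ht : t ∈ TI) (hen : N.enabled M' t) :
    N.fire M' t ∈ N.RI TI M := by
  obtain ⟨σ, hσ, hf⟩ := h
  refine ⟨σ ++ [t], fun s hs => ?_, hf.append (.cons hen (.nil _))⟩
  rcases List.mem_append.1 hs with hs | hs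
  · exact hσ s hs
  · exact List.mem_singleton.1 hs ▸ ht

theorem fvec_append (σ τ : List (Fin n)) : fvec (σ ++ τ) = fvec σ + fvec τ :=
  funext fun _ => List.count_append

theorem fvec_cons_apply (t s : Fin n) (σ : List (Fin n)) :
    fvec (t :: σ) s = fvec σ s + if t = s then 1 else 0 := by
  simp [fvec, List.count_cons]

theorem fvec_erase_apply (u s : Fin n) (σ : List (Fin n)) :
    fvec (σ.erase u) s = fvec σ s - if u = s then 1 else 0 := by
  simp [fvec, List.count_erase]

theorem ImplicitSeq.of_fvec_le (hσ : ImplicitSeq TI σ) (h : fvec ρ ≤ fvec σ) :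
    ImplicitSeq TI ρ :=
  fun s hs => hσ s (List.count_pos_iff.1 ((List.count_pos_iff.2 hs).trans_le (h s)))

theorem cast_fire_apply (hen : N.enabled M t) (p : Fin m) :
    (N.fire M t p : ℤ) = M p + N.C p t := by
  have := hen p
  simp only [fire, C]
  omega

theorem fires.stateEq_fvec (h : N.fires M σ M') : N.stateEq M (fvec σ) M' := by
  induction h with
  | nil => simp [stateEq, fvec]
  | @cons M _ t σ hen _ ih =>
    intro p
    simp only [ih p, cast_fire_apply hen, fvec_cons_apply, Nat.cast_add, mul_add,
      Finset.sum_add_distrib, Nat.cast_ite, Nat.cast_one, Nat.cast_zero, mul_ite, mul_one,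
      mul_zero, Finset.sum_ite_eq, Finset.mem_univ, if_true]
    ring

theorem stateEq.unique {y : Fin n → ℕ} {M₁ M₂ : Fin m → ℕ} (h₁ : N.stateEq M y M₁)
    (h₂ : N.stateEq M y M₂) : M₁ = M₂ :=
  funext fun p => Nat.cast_injective ((h₁ p).trans (h₂ p).symm)

theorem fires.eq_of_fvec_eq {M₁ M₂ : Fin m → ℕ} (h₁ : N.fires M σ M₁) (h₂ : N.fires M τ M₂)
    (h : fvec σ = fvec τ) : M₁ = M₂ :=
  h₁.stateEq_fvec.unique (h ▸ h₂.stateEq_fvec)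

theorem fire_comm (hu : N.enabled M u) (ht : N.enabled M t) :
    N.fire (N.fire M u) t = N.fire (N.fire M t) u := by
  funext p
  have := hu p
  have := ht p
  simp only [fire]
  omega

def DisjointPresets (N : PetriNet m n) (u v : Fin n) : Prop :=
  ∀ p, N.Pre p u = 0 ∨ N.Pre p v = 0

theorem DisjointPresets.symm (h : N.DisjointPresets u t) : N.DisjointPresets t u :=
  fun p => (h p).symm

theorem DisjointPresets.enabled_fire (h : N.DisjointPresets u t) (hu : N.enabled M u)
    (ht : N.enabled M t) : N.enabled (N.fire M u) t := by
  intro p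
  have := h p
  have := hu p
  have := ht p
  simp only [fire]
  omega

theorem NonConflicting.disjointPresets (hnc : N.NonConflicting TI) (hu : u ∈ TI) (hut : u ≠ t) :
    N.DisjointPresets u t := by
  intro p
  by_contra! h
  exact hnc u hu ⟨p, Nat.pos_of_ne_zero h.1, t, hut.symm, Nat.pos_of_ne_zero h.2⟩

theorem NonConflicting.disjointPresets_of_implicitSeq (hnc : N.NonConflicting TI) (ht : t ∉ TI)
    (hσ : ImplicitSeq TI σ) : ∀ v ∈ σ, N.DisjointPresets t v :=
  fun v hv => (hnc.disjointPresets (hσ v hv) (ne_of_mem_of_not_mem (hσ v hv) ht)).symm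

theorem fires.fire_of_disjointPresets (hσ : N.fires M σ M') (hen : N.enabled M t)
    (hd : ∀ v ∈ σ, N.DisjointPresets t v) :
    N.enabled M' t ∧ N.fires (N.fire M t) σ (N.fire M' t) := by
  induction hσ with
  | nil => exact ⟨hen, .nil _⟩
  | @cons M _ v σ hv _ ih =>
    have htv := hd v List.mem_cons_self
    obtain ⟨hen', hf⟩ := ih (htv.symm.enabled_fire hv hen)
      fun s hs => hd s (List.mem_cons_of_mem v hs)
    exact ⟨hen', .cons (htv.enabled_fire hen hv) (fire_comm hen hv ▸ hf)⟩

theorem exists_fires_fire_erase (hnc : N.NonConflicting TI) (hu : u ∈ TI)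
    (hen : N.enabled M u) (hσ : N.fires M σ M') : ∃ M'', N.fires (N.fire M u) (σ.erase u) M'' := by
  induction hσ with
  | nil => exact ⟨_, .nil _⟩
  | @cons M _ v σ hv hrest ih =>
    by_cases hvu : v = u
    · subst hvu
      exact ⟨_, List.erase_cons_head v σ ▸ hrest⟩
    · have huv := hnc.disjointPresets hu (Ne.symm hvu)
      obtain ⟨M'', hf⟩ := ih (huv.symm.enabled_fire hv hen)
      rw [List.erase_cons_tail (by simpa using hvu)]
      exact ⟨M'', .cons (huv.enabled_fire hen hv) (fire_comm hen hv ▸ hf)⟩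

theorem exists_fires_residual (hnc : N.NonConflicting TI) (hτ : ImplicitSeq TI τ)
    (hτf : N.fires M τ M') (hσf : N.fires M σ M'') :
    ∃ ρ M₁, N.fires M' ρ M₁ ∧ fvec ρ = fvec σ - fvec τ := by
  induction hτf generalizing σ M'' with
  | nil => exact ⟨σ, M'', hσf, funext fun s => by simp [fvec]⟩
  | @cons M _ u τ hu _ ih =>
    obtain ⟨_, hf⟩ := exists_fires_fire_erase hnc (hτ u List.mem_cons_self) hu hσf
    obtain ⟨ρ, M₁, hρ, hfv⟩ := ih (fun s hs => hτ s (List.mem_cons_of_mem u hs)) hf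
    refine ⟨ρ, M₁, hρ, funext fun s => ?_⟩
    rw [hfv, Pi.sub_apply, Pi.sub_apply, fvec_erase_apply, fvec_cons_apply]
    omega

theorem RI_confluent (hnc : N.NonConflicting TI) {M₁ M₂ : Fin m → ℕ} (h₁ : M₁ ∈ N.RI TI M)
    (h₂ : M₂ ∈ N.RI TI M) : ∃ M', M' ∈ N.RI TI M₁ ∧ M' ∈ N.RI TI M₂ := by
  obtain ⟨τ₁, hτ₁, hf₁⟩ := h₁
  obtain ⟨τ₂, hτ₂, hf₂⟩ := h₂
  obtain ⟨ρ₁, M', hρ₁, hfv₁⟩ := exists_fires_residual hnc hτ₁ hf₁ hf₂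
  obtain ⟨ρ₂, M'', hρ₂, hfv₂⟩ := exists_fires_residual hnc hτ₂ hf₂ hf₁
  have hM : M' = M'' := (hf₁.append hρ₁).eq_of_fvec_eq (hf₂.append hρ₂) <| funext fun s => by
    simp only [fvec_append, hfv₁, hfv₂, Pi.add_apply, Pi.sub_apply]
    omega
  subst hM
  exact ⟨M', ⟨ρ₁, hτ₂.of_fvec_le (hfv₁ ▸ tsub_le_self), hρ₁⟩,
    ⟨ρ₂, hτ₁.of_fvec_le (hfv₂ ▸ tsub_le_self), hρ₂⟩⟩

theorem exists_minExplVec_le {α : List (Fin n)} (h : N.IsExplanation TI M t α) :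
    ∃ y, N.MinExplVec TI M t y ∧ y ≤ fvec α := by
  obtain ⟨y, ⟨hyα, hy⟩, hmin⟩ := wellFounded_lt.has_min
    {y | y ≤ fvec α ∧ ∃ σ, N.IsExplanation TI M t σ ∧ fvec σ = y} ⟨_, le_rfl, α, h, rfl⟩
  exact ⟨y, ⟨hy, fun σ hσ hlt => hmin _ ⟨hlt.le.trans hyα, σ, hσ, rfl⟩ hlt⟩, hyα⟩

theorem brgStep_fire {y : Fin n → ℕ} (ht : t ∉ TI) (hy : N.MinExplVec TI M t y)
    (hσ : N.fires M σ M') (hfv : fvec σ = y) (hen : N.enabled M' t) :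
    N.BRGstep TI M (N.fire M' t) :=
  ⟨t, ht, y, hy, fun p => by rw [cast_fire_apply hen, hσ.stateEq_fvec p, hfv]⟩

theorem BRGstep.exists_fire (h : N.BRGstep TI M M') :
    ∃ t ∉ TI, ∃ My ∈ N.RI TI M, N.enabled My t ∧ M' = N.fire My t := by
  obtain ⟨t, ht, y, ⟨⟨σ, ⟨hσ, My, hf, hen⟩, hfv⟩, _⟩, heq⟩ := h
  refine ⟨t, ht, My, ⟨σ, hσ, hf⟩, hen, funext fun p => Nat.cast_injective (R := ℤ) ?_⟩
  rw [heq p, cast_fire_apply hen, hf.stateEq_fvec p, hfv]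

theorem reach_of_reflTransGen (h : Relation.ReflTransGen (N.BRGstep TI) M M') :
    M' ∈ N.Reach M := by
  induction h with
  | refl => exact mem_reach_self M
  | tail _ hstep ih =>
    obtain ⟨t, -, My, hMy, hen, rfl⟩ := hstep.exists_fire
    exact reach_trans (reach_trans ih (RI_subset_reach _ hMy)) ⟨[t], .cons hen (.nil _)⟩

/-- The implicit sequence leading to `M` explains `t` at `Mb`; a minimal explanation below it
leaves a residual implicit sequence, which commutes with `t`. -/
theorem exists_brgStep_of_mem_RI (hnc : N.NonConflicting TI) (hM : M ∈ N.RI TI Mb)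
    (ht : t ∉ TI) (hen : N.enabled M t) :
    ∃ Mb', N.BRGstep TI Mb Mb' ∧ N.fire M t ∈ N.RI TI Mb' := by
  obtain ⟨τ, hτ, hτf⟩ := hM
  obtain ⟨y, hy, hyτ⟩ := exists_minExplVec_le ⟨hτ, M, hτf, hen⟩
  obtain ⟨σ, ⟨hσ, My, hσf, henY⟩, rfl⟩ := hy.1
  obtain ⟨ρ, M', hρf, hfv⟩ := exists_fires_residual hnc hσ hσf hτf
  have hM' : M' = M := (hσf.append hρf).eq_of_fvec_eq hτf (by
    rw [fvec_append, hfv, add_tsub_cancel_of_le hyτ])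
  subst hM'
  have hρ : ImplicitSeq TI ρ := hτ.of_fvec_le (hfv ▸ tsub_le_self)
  obtain ⟨-, hfire⟩ := hρf.fire_of_disjointPresets henY (hnc.disjointPresets_of_implicitSeq ht hρ)
  exact ⟨_, brgStep_fire ht hy hσf rfl henY, ρ, hρ, hfire⟩

theorem exists_basis_of_fires (hnc : N.NonConflicting TI) (hM : M ∈ N.RI TI Mb)
    (hσ : N.fires M σ M') :
    ∃ Mb', Relation.ReflTransGen (N.BRGstep TI) Mb Mb' ∧ M' ∈ N.RI TI Mb' := by
  induction hσ generalizing Mb with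
  | nil => exact ⟨Mb, .refl, hM⟩
  | @cons M _ t _ hen _ ih =>
    by_cases ht : t ∈ TI
    · exact ih (fire_mem_RI hM ht hen)
    · obtain ⟨Mb₂, hstep, hmem⟩ := exists_brgStep_of_mem_RI hnc hM ht hen
      obtain ⟨Mb', hacc, h⟩ := ih hmem
      exact ⟨Mb', .head hstep hacc, h⟩

theorem exists_basis_of_reach (hnc : N.NonConflicting TI) (h : M' ∈ N.Reach M) :
    ∃ Mb, Relation.ReflTransGen (N.BRGstep TI) M Mb ∧ M' ∈ N.RI TI Mb :=
  let ⟨_, hσ⟩ := h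
  exists_basis_of_fires hnc (mem_RI_self M) hσ

theorem exists_mem_RI_of_brgStep (hnc : N.NonConflicting TI) (hM : M ∈ N.RI TI Mb)
    (h : N.BRGstep TI Mb M') : ∃ M₂ ∈ N.RI TI M', M₂ ∈ N.Reach M := by
  obtain ⟨t, ht, My, hMy, hen, rfl⟩ := h.exists_fire
  obtain ⟨M₁, ⟨ρ, hρ, hρf⟩, hM₁⟩ := RI_confluent hnc hMy hM
  obtain ⟨hen₁, hfire⟩ := hρf.fire_of_disjointPresets hen (hnc.disjointPresets_of_implicitSeq ht hρ)
  exact ⟨_, ⟨ρ, hρ, hfire⟩, reach_trans (RI_subset_reach M hM₁) ⟨[t], .cons hen₁ (.nil _)⟩⟩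

theorem exists_mem_RI_of_reflTransGen (hnc : N.NonConflicting TI) (hM : M ∈ N.RI TI Mb)
    (h : Relation.ReflTransGen (N.BRGstep TI) Mb M') : ∃ M₂ ∈ N.RI TI M', M₂ ∈ N.Reach M := by
  induction h with
  | refl => exact ⟨M, hM, mem_reach_self M⟩
  | tail _ hstep ih =>
    obtain ⟨M₁, hM₁, hreach₁⟩ := ih
    obtain ⟨M₂, hM₂, hreach₂⟩ := exists_mem_RI_of_brgStep hnc hM₁ hstep
    exact ⟨M₂, hM₂, reach_trans hreach₁ hreach₂⟩

theorem weight_fire (w : Fin m → ℤ) (hen : N.enabled M t) :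
    ∑ p, w p * (N.fire M t p : ℤ) = ∑ p, w p * (M p : ℤ) + ∑ p, w p * N.C p t := by
  simp only [cast_fire_apply hen, mul_add, Finset.sum_add_distrib]

theorem weight_le_of_mem_RI {w : Fin m → ℤ} (hni : N.NonIncreasing w TI) (h : M' ∈ N.RI TI M) :
    ∑ p, w p * (M' p : ℤ) ≤ ∑ p, w p * (M p : ℤ) := by
  obtain ⟨σ, hσ, hf⟩ := h
  induction hf with
  | nil => exact le_rfl
  | @cons M _ t σ hen _ ih =>
    have hσ' : ImplicitSeq TI σ := fun s hs => hσ s (List.mem_cons_of_mem t hs)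
    calc _ ≤ ∑ p, w p * (N.fire M t p : ℤ) := ih hσ'
      _ ≤ _ := by
        rw [weight_fire w hen]
        linarith [hni t (hσ t List.mem_cons_self)]

end PetriNet

theorem nonblocking_iff_cibrg_general {m n : ℕ} (N : PetriNet m n) (TI : Set (Fin n))
    (M0 : Fin m → ℕ) (w : Fin m → ℤ) (k : ℤ)
    (hnc : N.NonConflicting TI)
    (hni : N.NonIncreasing w TI) :
    N.NonBlocking M0 w k ↔
      ∀ Mb, N.Basis TI M0 Mb →
        ∃ Mb', Relation.ReflTransGen (N.BRGstep TI) Mb Mb' ∧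
          ∃ M ∈ N.RI TI Mb', Final w k M := by
  constructor
  · intro hnb Mb hMb
    obtain ⟨Mf, hMf, hfin⟩ := hnb Mb (reach_of_reflTransGen hMb)
    obtain ⟨Mb', hacc, hMfI⟩ := exists_basis_of_reach hnc hMf
    exact ⟨Mb', hacc, Mf, hMfI, hfin⟩
  · intro h M hM
    obtain ⟨Mb, hMb, hMI⟩ := exists_basis_of_reach hnc hM
    obtain ⟨Mb', hacc, Mf, hMfI, hfin⟩ := h Mb hMb
    obtain ⟨M₂, hM₂I, hM₂⟩ := exists_mem_RI_of_reflTransGen hnc hMI hacc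
    obtain ⟨M₃, hM₃₂, hM₃f⟩ := RI_confluent hnc hM₂I hMfI
    exact ⟨M₃, reach_trans hM₂ (RI_subset_reach M₂ hM₃₂), (weight_le_of_mem_RI hni hM₃f).trans hfin⟩

/-- main theorem: a bounded plant is non-blocking iff every
basis marking of the CI-BRG can access a basis marking whose implicit reach
contains a final marking. -/
theorem nonblocking_iff_cibrg {m n : ℕ} (N : PetriNet m n) (TI : Set (Fin n))
    (M0 : Fin m → ℕ) (w : Fin m → ℤ) (k : ℤ)
    (hb : N.Bounded M0)
    (hacyc : N.SubnetAcyclic TI) (hnc : N.NonConflicting TI)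
    (hni : N.NonIncreasing w TI) :
    N.NonBlocking M0 w k ↔
      ∀ Mb, N.Basis TI M0 Mb →
        ∃ Mb', Relation.ReflTransGen (N.BRGstep TI) Mb Mb' ∧
          ∃ M ∈ N.RI TI Mb', Final w k M :=
  nonblocking_iff_cibrg_general N TI M0 w k hnc hni
end

section
/- Let B be a CI-BRG of a plant G (T_I non-conflicting, non-increasing, T_I-induced subnet acyclic and conflict-free), and let D be the set of dead markings of G. For any basis marking M_b of B, if R_I(M_b) ∩ D ≠ ∅ then R_I(M_b) ∩ D = {M_{b,max}}, the singleton consisting of the i-maximal marking of M_b. -/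
open PetriNet

/-
In a conflict-free implicit subnet, firing an implicit transition never disables another one,
so enabled implicit transitions can be moved to the front of any firable implicit sequence.
Hence if `σ` is firable at `Mb` and its firing vector is dominated by that of the maximal
sequence `σmax`, the rest `σmax \ σ` is still firable after `σ` and leads to `Mbmax`. A dead
marking fires nothing, so a dead marking of `R_I(Mb)` must be `Mbmax`.
-/

namespace PetriNet

variable {m n : ℕ} {N : PetriNet m n} {TI : Set (Fin n)}

theorem ConflictFreeSubnet.pre_eq_zero_or_pre_eq_zero (hcf : N.ConflictFreeSubnet TI)
    {s t : Fin n} (hs : s ∈ TI) (ht : t ∈ TI) (hst : s ≠ t) (p : Fin m) :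
    N.Pre p s = 0 ∨ N.Pre p t = 0 := by
  by_contra! h
  exact hst (hcf p s hs t ht (Nat.pos_of_ne_zero h.1) (Nat.pos_of_ne_zero h.2))

theorem ConflictFreeSubnet.enabled_fire (hcf : N.ConflictFreeSubnet TI) {M : Fin m → ℕ}
    {s t : Fin n} (hs : s ∈ TI) (ht : t ∈ TI) (hst : s ≠ t)
    (hse : N.enabled M s) (hte : N.enabled M t) : N.enabled (N.fire M s) t := by
  intro p
  have := hse p
  have := hte p
  rcases hcf.pre_eq_zero_or_pre_eq_zero hs ht hst p with h | h <;> simp only [fire] <;> omega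

theorem ConflictFreeSubnet.fire_comm (hcf : N.ConflictFreeSubnet TI) {M : Fin m → ℕ}
    {s t : Fin n} (hs : s ∈ TI) (ht : t ∈ TI) (hst : s ≠ t)
    (hse : N.enabled M s) (hte : N.enabled M t) :
    N.fire (N.fire M s) t = N.fire (N.fire M t) s := by
  funext p
  have := hse p
  have := hte p
  rcases hcf.pre_eq_zero_or_pre_eq_zero hs ht hst p with h | h <;> simp only [fire] <;> omega

theorem ConflictFreeSubnet.fires_fire_erase (hcf : N.ConflictFreeSubnet TI) {t : Fin n}
    {σ : List (Fin n)} {M M' : Fin m → ℕ} (hσ : ImplicitSeq TI σ) (htσ : t ∈ σ)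
    (hte : N.enabled M t) (h : N.fires M σ M') :
    N.fires (N.fire M t) (σ.erase t) M' := by
  induction h with
  | nil => simp at htσ
  | @cons M M' s τ hse _ ih =>
    by_cases hst : s = t
    · subst hst
      simpa
    have hs : s ∈ TI := hσ s List.mem_cons_self
    have ht : t ∈ TI := hσ t htσ
    rw [List.erase_cons_tail (by simpa using hst)]
    refine .cons (hcf.enabled_fire ht hs (Ne.symm hst) hte hse) ?_
    rw [← hcf.fire_comm hs ht hst hse hte]
    exact ih (fun u hu => hσ u (List.mem_cons_of_mem s hu))
      ((List.mem_cons.mp htσ).resolve_left (Ne.symm hst)) (hcf.enabled_fire hs ht hst hse hte)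

theorem ConflictFreeSubnet.fires_diff (hcf : N.ConflictFreeSubnet TI) {σ σmax : List (Fin n)}
    {M M₁ M₂ : Fin m → ℕ} (hσmax : ImplicitSeq TI σmax) (hsub : List.Subperm σ σmax)
    (h : N.fires M σ M₁) (hmax : N.fires M σmax M₂) :
    N.fires M₁ (σmax.diff σ) M₂ := by
  induction h generalizing σmax with
  | nil => simpa
  | @cons M M₁ t τ hte _ ih =>
    have htσ : t ∈ σmax := hsub.subset List.mem_cons_self
    rw [List.diff_cons]
    exact ih (fun u hu => hσmax u (List.mem_of_mem_erase hu))
      (by simpa using hsub.erase t) (hcf.fires_fire_erase hσmax htσ hte hmax)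

theorem subperm_of_fvec_le {σ τ : List (Fin n)} (h : fvec σ ≤ fvec τ) : List.Subperm σ τ :=
  List.subperm_ext_iff.mpr fun x _ => h x

theorem Dead.eq_of_fires {M M' : Fin m → ℕ} {σ : List (Fin n)} (hM : N.Dead M)
    (h : N.fires M σ M') : M' = M := by
  cases h with
  | nil => rfl
  | cons hen _ => exact absurd hen (hM _)

end PetriNet

theorem dead_in_ri_is_imax_general {m n : ℕ} (N : PetriNet m n) (TI : Set (Fin n))
    (hcf : N.ConflictFreeSubnet TI)
    (Mb Mbmax : Fin m → ℕ)
    (ymax : Fin n → ℕ) (hmax : N.GreatestIFV TI Mb ymax)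
    (hreach : ∃ σ, ImplicitSeq TI σ ∧ fvec σ = ymax ∧ N.fires Mb σ Mbmax)
    (hdead : ∃ M ∈ N.RI TI Mb, N.Dead M) :
    {M | M ∈ N.RI TI Mb ∧ N.Dead M} = {Mbmax} := by
  obtain ⟨σmax, hσmax, rfl, hfmax⟩ := hreach
  have dead_eq : ∀ M ∈ N.RI TI Mb, N.Dead M → M = Mbmax := by
    rintro M ⟨σ, hσ, hfσ⟩ hM
    have hsub : List.Subperm σ σmax := subperm_of_fvec_le (hmax.2 _ ⟨σ, M, hσ, rfl, hfσ⟩)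
    exact (hM.eq_of_fires (hcf.fires_diff hσmax hsub hfσ hfmax)).symm
  obtain ⟨Md, hMd, hMd_dead⟩ := hdead
  ext M
  constructor
  · exact fun ⟨hM, hM_dead⟩ => dead_eq M hM hM_dead
  · rintro rfl
    exact ⟨⟨σmax, hσmax, hfmax⟩, dead_eq Md hMd hMd_dead ▸ hMd_dead⟩

/-- if the implicit reach of a basis marking contains a dead
marking, then the only dead marking it contains is the i-maximal marking. -/
theorem dead_in_ri_is_imax {m n : ℕ} (N : PetriNet m n) (TI : Set (Fin n))
    (w : Fin m → ℤ)
    (hacyc : N.SubnetAcyclic TI) (hnc : N.NonConflicting TI)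
    (hni : N.NonIncreasing w TI) (hcf : N.ConflictFreeSubnet TI)
    (M0 Mb Mbmax : Fin m → ℕ) (hMb : N.Basis TI M0 Mb)
    (ymax : Fin n → ℕ) (hmax : N.GreatestIFV TI Mb ymax)
    (hreach : ∃ σ, ImplicitSeq TI σ ∧ fvec σ = ymax ∧ N.fires Mb σ Mbmax)
    (hdead : ∃ M ∈ N.RI TI Mb, N.Dead M) :
    {M | M ∈ N.RI TI Mb ∧ N.Dead M} = {Mbmax} :=
  dead_in_ri_is_imax_general N TI hcf Mb Mbmax ymax hmax hreach hdead
end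

section
/- In a CI-BRG of a plant G = (N, M_0, F), if the i-maximal marking M_{b,max} of a basis marking M_b is dead and not final, then M_b is not accessible in the CI-BRG to any basis marking M_b' with R_I(M_b') ∩ F ≠ ∅; consequently, G is blocking. -/
open PetriNet

namespace PetriNetAux

variable {m n : ℕ}

lemma fire_cast (N : PetriNet m n) {M : Fin m → ℕ} {t : Fin n} (h : N.enabled M t) (p : Fin m) :
    ((N.fire M t) p : ℤ) = M p + N.C p t := by
  have := h p
  simp only [PetriNet.fire, PetriNet.C]
  omega

lemma fires_stateEq (N : PetriNet m n) {M M' : Fin m → ℕ} {σ : List (Fin n)}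
    (h : N.fires M σ M') (p : Fin m) :
    (M' p : ℤ) = M p + ∑ t, N.C p t * (fvec σ t : ℤ) := by
  induction h generalizing p with
  | nil M => simp [fvec]
  | @cons M M' t σ henb hrest ih =>
    have key : ∑ s, N.C p s * ((fvec (t :: σ)) s : ℤ)
        = (∑ s, N.C p s * (fvec σ s : ℤ)) + N.C p t := by
      have : ∀ s : Fin n, (fvec (t :: σ)) s = fvec σ s + if s = t then 1 else 0 := by
        intro s
        rcases eq_or_ne s t with h | h
        · subst h; simp [fvec, List.count_cons]
        · simp [fvec, List.count_cons, h, h.symm]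
      simp only [this]
      push_cast
      simp [mul_add, Finset.sum_add_distrib, mul_ite, mul_one, mul_zero]
    rw [key, ih p, fire_cast N henb p]
    ring

lemma fires_append (N : PetriNet m n) {M M1 M2 : Fin m → ℕ} {σ1 σ2 : List (Fin n)}
    (h1 : N.fires M σ1 M1) (h2 : N.fires M1 σ2 M2) : N.fires M (σ1 ++ σ2) M2 := by
  induction h1 with
  | nil M => simpa using h2
  | cons henb hrest ih => exact PetriNet.fires.cons henb (ih h2)

lemma reach_trans (N : PetriNet m n) {M0 M1 M2 : Fin m → ℕ}
    (h1 : M1 ∈ N.Reach M0) (h2 : M2 ∈ N.Reach M1) : M2 ∈ N.Reach M0 := by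
  obtain ⟨σ1, h1⟩ := h1
  obtain ⟨σ2, h2⟩ := h2
  exact ⟨σ1 ++ σ2, fires_append N h1 h2⟩

lemma basis_reach (N : PetriNet m n) (TI : Set (Fin n)) {M0 Mb : Fin m → ℕ}
    (h : N.Basis TI M0 Mb) : Mb ∈ N.Reach M0 := by
  induction h with
  | refl => exact ⟨[], PetriNet.fires.nil M0⟩
  | @tail Mc Md hab hbc ih =>
    obtain ⟨t, ht, y, ⟨⟨σ, ⟨himp, M', hfir, henb⟩, hfv⟩, -⟩, heq⟩ := hbc
    refine reach_trans N ih ⟨σ ++ [t], fires_append N hfir ?_⟩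
    have hMd : Md = N.fire M' t := by
      funext p
      have e1 : ((N.fire M' t) p : ℤ) = M' p + N.C p t := fire_cast N henb p
      have e2 := fires_stateEq N hfir p
      rw [hfv] at e2
      have : (Md p : ℤ) = ((N.fire M' t) p : ℤ) := by rw [e1, e2, heq p]
      exact_mod_cast this
    rw [hMd]
    exact PetriNet.fires.cons henb (PetriNet.fires.nil _)

lemma pre_zero_of_implicit (N : PetriNet m n) {TI : Set (Fin n)}
    (hnc : N.NonConflicting TI) {t : Fin n} {p : Fin m}
    (ht : t ∉ TI) (hp : 0 < N.Pre p t) {s : Fin n} (hs : s ∈ TI) : N.Pre p s = 0 := by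
  by_contra h
  exact hnc s hs ⟨p, Nat.pos_of_ne_zero h, t, fun he => ht (he ▸ hs), hp⟩

lemma fvec_zero (TI : Set (Fin n)) {σ : List (Fin n)} (himp : ImplicitSeq TI σ)
    {s : Fin n} (hs : s ∉ TI) : fvec σ s = 0 := by
  simp only [fvec, List.count_eq_zero]
  exact fun hmem => hs (himp s hmem)

end PetriNetAux

open PetriNetAux

/-- if the i-maximal marking of a basis marking `M_b` is dead
and not final, then `M_b` cannot access any basis marking whose implicit reach
meets the final set; consequently the plant is blocking. -/
theorem blocking_of_dead_nonfinal_imax {m n : ℕ} (N : PetriNet m n)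
    (TI : Set (Fin n)) (M0 : Fin m → ℕ) (w : Fin m → ℤ) (k : ℤ)
    (hacyc : N.SubnetAcyclic TI) (hnc : N.NonConflicting TI)
    (hni : N.NonIncreasing w TI)
    (Mb Mbmax : Fin m → ℕ) (hMb : N.Basis TI M0 Mb)
    (ymax : Fin n → ℕ) (hmax : N.GreatestIFV TI Mb ymax)
    (hreach : ∃ σ, ImplicitSeq TI σ ∧ fvec σ = ymax ∧ N.fires Mb σ Mbmax)
    (hdead : N.Dead Mbmax) (hnf : ¬ Final w k Mbmax) :
    (¬ ∃ Mb', Relation.ReflTransGen (N.BRGstep TI) Mb Mb' ∧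
        ∃ M ∈ N.RI TI Mb', Final w k M) ∧
    ¬ N.NonBlocking M0 w k := by
  obtain ⟨σm, himpm, hfvm, hfirm⟩ := hreach
  -- No transition enabled at any marking implicitly reachable from Mb whose
  -- explaining transition is explicit: in fact Mbmax dominates on relevant places.
  have hdom : ∀ (σ : List (Fin n)) (M' : Fin m → ℕ), ImplicitSeq TI σ → N.fires Mb σ M' →
      ∀ t ∉ TI, ∀ p, 0 < N.Pre p t → (M' p : ℤ) ≤ Mbmax p := by
    intro σ M' himp hfir t ht p hp
    have hy' : fvec σ ≤ ymax := hmax.2 _ ⟨σ, M', himp, rfl, hfir⟩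
    have e1 := fires_stateEq N hfir p
    have e2 := fires_stateEq N hfirm p
    rw [hfvm] at e2
    rw [e1, e2]
    have : ∀ s : Fin n, N.C p s * (fvec σ s : ℤ) ≤ N.C p s * (ymax s : ℤ) := by
      intro s
      by_cases hs : s ∈ TI
      · have hpre : N.Pre p s = 0 := pre_zero_of_implicit N hnc ht hp hs
        have hC : 0 ≤ N.C p s := by simp [PetriNet.C, hpre]
        exact mul_le_mul_of_nonneg_left (by exact_mod_cast hy' s) hC
      · rw [fvec_zero TI himp hs, ← hfvm, fvec_zero TI himpm hs]
    have := Finset.sum_le_sum (s := Finset.univ) (fun s _ => this s)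
    linarith
  -- No BRG step out of Mb
  have hnostep : ∀ M2, ¬ N.BRGstep TI Mb M2 := by
    rintro M2 ⟨t, ht, y, ⟨⟨σ, ⟨himp, M', hfir, henb⟩, hfv⟩, -⟩, -⟩
    apply hdead t
    intro p
    rcases Nat.eq_zero_or_pos (N.Pre p t) with h0 | hp
    · simp [h0]
    · have h1 := henb p
      have h2 := hdom σ M' himp hfir t ht p hp
      have : (N.Pre p t : ℤ) ≤ Mbmax p := by
        calc (N.Pre p t : ℤ) ≤ M' p := by exact_mod_cast h1
        _ ≤ Mbmax p := h2
      exact_mod_cast this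
  -- No final marking in RI(Mb)
  have hRIfinal : ∀ M ∈ N.RI TI Mb, ¬ Final w k M := by
    rintro M ⟨σ, himp, hfir⟩ hF
    have hy' : fvec σ ≤ ymax := hmax.2 _ ⟨σ, M, himp, rfl, hfir⟩
    -- w·M ≥ w·Mbmax
    have key : ∑ p, w p * (Mbmax p : ℤ) ≤ ∑ p, w p * (M p : ℤ) := by
      have eM : ∑ p, w p * (M p : ℤ)
          = (∑ p, w p * (Mb p : ℤ)) + ∑ s, (∑ p, w p * N.C p s) * (fvec σ s : ℤ) := by
        have : ∀ p, w p * (M p : ℤ)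
            = w p * (Mb p : ℤ) + ∑ s, (w p * N.C p s) * (fvec σ s : ℤ) := by
          intro p
          rw [fires_stateEq N hfir p]
          rw [mul_add, Finset.mul_sum]
          congr 1
          exact Finset.sum_congr rfl (fun s _ => by ring)
        simp only [this, Finset.sum_add_distrib]
        congr 1
        rw [Finset.sum_comm]
        exact Finset.sum_congr rfl (fun s _ => by rw [Finset.sum_mul])
      have eMax : ∑ p, w p * (Mbmax p : ℤ)
          = (∑ p, w p * (Mb p : ℤ)) + ∑ s, (∑ p, w p * N.C p s) * (ymax s : ℤ) := by
        have : ∀ p, w p * (Mbmax p : ℤ)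
            = w p * (Mb p : ℤ) + ∑ s, (w p * N.C p s) * (ymax s : ℤ) := by
          intro p
          have := fires_stateEq N hfirm p
          rw [hfvm] at this
          rw [this, mul_add, Finset.mul_sum]
          congr 1
          exact Finset.sum_congr rfl (fun s _ => by ring)
        simp only [this, Finset.sum_add_distrib]
        congr 1
        rw [Finset.sum_comm]
        exact Finset.sum_congr rfl (fun s _ => by rw [Finset.sum_mul])
      rw [eM, eMax]
      have : ∀ s : Fin n, (∑ p, w p * N.C p s) * (ymax s : ℤ)
          ≤ (∑ p, w p * N.C p s) * (fvec σ s : ℤ) := by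
        intro s
        by_cases hs : s ∈ TI
        · exact mul_le_mul_of_nonpos_left (by exact_mod_cast hy' s) (hni s hs)
        · rw [fvec_zero TI himp hs, ← hfvm, fvec_zero TI himpm hs]
      have := Finset.sum_le_sum (s := Finset.univ) (fun s _ => this s)
      linarith
    exact hnf (le_trans key hF)
  constructor
  · rintro ⟨Mb', hRT, M, hMRI, hF⟩
    rcases hRT.cases_head with h | ⟨c, hstep, -⟩
    · exact hRIfinal M (h ▸ hMRI) hF
    · exact hnostep c hstep
  · intro hNB
    have hMbmaxReach : Mbmax ∈ N.Reach M0 :=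
      reach_trans N (basis_reach N TI hMb) ⟨σm, hfirm⟩
    obtain ⟨M', hM'reach, hF⟩ := hNB Mbmax hMbmaxReach
    obtain ⟨σ, hfires⟩ := hM'reach
    cases hfires with
    | nil => exact hnf hF
    | cons henb _ => exact hdead _ henb
end

section
/- Let N be a Petri net with non-conflicting transition t ∈ T_E (t shares no input place with any transition of T_I) and suppose M[t⟩ holds at marking M. Then for any marking M' reachable from M by firing only transitions in T_I, transition t is still enabled at M': persistence of explicit transitions under implicit firings in a non-conflicting partition. -/
open PetriNet

namespace PetriNet

variable {m n : ℕ}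

theorem le_fire_apply_of_pre_eq_zero (N : PetriNet m n) (M : Fin m → ℕ) {p : Fin m} {s : Fin n}
    (hp : N.Pre p s = 0) : M p ≤ N.fire M s p := by
  simp only [fire, hp, Nat.sub_zero]
  exact Nat.le_add_right _ _

theorem fires.apply_le_of_forall_pre_eq_zero {N : PetriNet m n} {M M' : Fin m → ℕ}
    {σ : List (Fin n)} (hf : N.fires M σ M') {p : Fin m} (hp : ∀ s ∈ σ, N.Pre p s = 0) :
    M p ≤ M' p := by
  induction hf with
  | nil => exact le_rfl
  | @cons M₀ _ s σ _ _ ih =>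
    exact (N.le_fire_apply_of_pre_eq_zero M₀ (hp s List.mem_cons_self)).trans
      (ih fun s' hs' => hp s' (List.mem_cons_of_mem s hs'))

end PetriNet

/-- an explicit transition sharing no input place with the
implicit transitions remains enabled under any implicit firings. -/
theorem explicit_persistence {m n : ℕ} (N : PetriNet m n) (TI : Set (Fin n))
    (t : Fin n)
    (hsep : ∀ p, 0 < N.Pre p t → ∀ t' ∈ TI, N.Pre p t' = 0)
    (M M' : Fin m → ℕ) (hen : N.enabled M t)
    (σ : List (Fin n)) (hσ : ImplicitSeq TI σ) (hf : N.fires M σ M') :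
    N.enabled M' t := by
  intro p
  rcases Nat.eq_zero_or_pos (N.Pre p t) with hzero | hpos
  · exact hzero ▸ Nat.zero_le _
  · exact (hen p).trans (hf.apply_le_of_forall_pre_eq_zero fun s hs => hsep p hpos s (hσ s hs))
end
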